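/- arXiv:2403.07477 — 2 statements merged into one kernel-verified Lean document; each statement's English description precedes it below -/
import Mathlib

section
/- Let m ≥ 3 be odd. Then for every n, p_m(n,-1) = (-1)^n p_m(n,1). In particular p_m(n,-1) ≠ 0 for all n and |p_m(n,-1)| → ∞ as n → ∞. -/
/-! Since `m` is odd, `m ∣ n + 1` forces `(n + 1) / m ≡ n + 1 [MOD 2]`, so the recursion
`p(n+1, t) = t p(n, t) + [m ∣ n + 1] p((n+1)/m, t)` preserves the parity of `p(n, ·)`:
`p(n, -t) = (-1)^n p(n, t)`. At `t = 1` the recursion shows that `p(n, 1)` is positive,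
nondecreasing, and grows by at least one at every multiple of `m`, hence is unbounded. -/

noncomputable def pm (m : ℕ) : ℕ → Polynomial ℤ
  | 0 => 1
  | n + 1 =>
      Polynomial.X * pm m n +
        if h : 2 ≤ m ∧ m ∣ (n + 1) then pm m ((n + 1) / m) else 0
decreasing_by
  · exact Nat.lt_succ_self n
  · exact Nat.div_lt_self (Nat.succ_pos n) (by omega)

open Polynomial Filter

section

variable (m : ℕ)

lemma pm_zero : pm m 0 = 1 := by
  rw [pm]

lemma eval_pm_succ (n : ℕ) (x : ℤ) :
    (pm m (n + 1)).eval x = x * (pm m n).eval x +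
      if 2 ≤ m ∧ m ∣ n + 1 then (pm m ((n + 1) / m)).eval x else 0 := by
  rw [pm]
  split_ifs <;> simp

lemma pm_eval_neg {m : ℕ} (hmo : Odd m) (n : ℕ) (x : ℤ) :
    (pm m n).eval (-x) = (-1) ^ n * (pm m n).eval x := by
  induction n using Nat.strong_induction_on with
  | _ n ih =>
    rcases n with _ | n
    · simp [pm_zero]
    rw [eval_pm_succ, eval_pm_succ, ih n n.lt_succ_self]
    split_ifs with h
    · obtain ⟨hm, q, hq⟩ := h
      have hdiv : (n + 1) / m = q := by
        rw [hq, Nat.mul_div_cancel_left q (by omega)]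
      have hsign : (-1 : ℤ) ^ q = (-1) ^ (n + 1) := by
        rw [hq, pow_mul, hmo.neg_one_pow]
      rw [ih _ (Nat.div_lt_self n.succ_pos (by omega)), hdiv, hsign, pow_succ]
      ring
    · rw [pow_succ]
      ring

lemma pm_eval_one_pos (n : ℕ) : 0 < (pm m n).eval 1 := by
  induction n using Nat.strong_induction_on with
  | _ n ih =>
    rcases n with _ | n
    · simp [pm_zero]
    rw [eval_pm_succ, one_mul]
    have hn := ih n n.lt_succ_self
    split_ifs with h
    · linarith [ih _ (Nat.div_lt_self n.succ_pos (by omega : 1 < m))]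
    · linarith

lemma monotone_pm_eval_one : Monotone fun n => (pm m n).eval 1 := by
  refine monotone_nat_of_le_succ fun n => ?_
  rw [eval_pm_succ, one_mul]
  split_ifs
  · linarith [pm_eval_one_pos m ((n + 1) / m)]
  · simp

lemma le_pm_eval_one_mul {m : ℕ} (hm : 2 ≤ m) (k : ℕ) : (k : ℤ) + 1 ≤ (pm m (m * k)).eval 1 := by
  induction k with
  | zero => simp [pm_zero]
  | succ k ih =>
    have hk : m * (k + 1) = m * k + (m - 1) + 1 := by
      rw [Nat.mul_succ]
      omega
    have hdvd : 2 ≤ m ∧ m ∣ m * k + (m - 1) + 1 := ⟨hm, hk ▸ dvd_mul_right m (k + 1)⟩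
    have hmono : (pm m (m * k)).eval 1 ≤ (pm m (m * k + (m - 1))).eval 1 :=
      monotone_pm_eval_one m (Nat.le_add_right _ _)
    rw [hk, eval_pm_succ, if_pos hdvd, one_mul]
    push_cast
    linarith [pm_eval_one_pos m ((m * k + (m - 1) + 1) / m)]

lemma tendsto_pm_eval_one_atTop {m : ℕ} (hm : 2 ≤ m) :
    Tendsto (fun n => (pm m n).eval 1) atTop atTop :=
  tendsto_atTop_atTop_of_monotone (monotone_pm_eval_one m) fun N =>
    ⟨m * N.toNat, by linarith [Int.self_le_toNat N, le_pm_eval_one_mul hm N.toNat]⟩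

end

/-- For odd m ≥ 3: p_m(n,-1) = (-1)^n p_m(n,1); in particular p_m(n,-1) ≠ 0 and
|p_m(n,-1)| → ∞. -/
theorem pm_eval_neg_one_odd (m : ℕ) (hm : 3 ≤ m) (hmo : Odd m) :
    (∀ n : ℕ, (pm m n).eval (-1) = (-1) ^ n * (pm m n).eval 1) ∧
    (∀ n : ℕ, (pm m n).eval (-1) ≠ 0) ∧
    Filter.Tendsto (fun n : ℕ => |(pm m n).eval (-1)|) Filter.atTop Filter.atTop := by
  have hsign : ∀ n : ℕ, (pm m n).eval (-1) = (-1) ^ n * (pm m n).eval 1 :=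
    fun n => pm_eval_neg hmo n 1
  have habs : ∀ n, |(pm m n).eval (-1)| = (pm m n).eval 1 := fun n => by
    rw [hsign, abs_mul, abs_neg_one_pow, one_mul, abs_of_pos (pm_eval_one_pos m n)]
  refine ⟨hsign, fun n => ?_, ?_⟩
  · rw [hsign]
    exact mul_ne_zero (pow_ne_zero _ (by norm_num)) (pm_eval_one_pos m n).ne'
  · simpa only [habs] using tendsto_pm_eval_one_atTop (by omega : 2 ≤ m)
end

section
/- Let m ≥ 2 and define the reduced polynomial p̃_m(n,t) := p_m(n,t)/t^{s_m(n)}, where s_m(n) is the base-m digit sum of n. Then p̃_m(n,t) is a polynomial in t^{m-1} with nonnegative integer coefficients. -/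
open Polynomial

namespace Nat

theorem digits_sum_add_mul {m : ℕ} (hm : 1 < m) {r : ℕ} (hr : r < m) (q : ℕ) :
    (m.digits (r + m * q)).sum = r + (m.digits q).sum := by
  rcases eq_or_ne r 0 with rfl | hr0
  · rcases eq_or_ne q 0 with rfl | hq0
    · simp
    · rw [digits_add m hm 0 q hr (Or.inr hq0), List.sum_cons]
  · rw [digits_add m hm r q hr (Or.inl hr0), List.sum_cons]

theorem digits_sum_mul_left {m : ℕ} (hm : 1 < m) (k : ℕ) :
    (m.digits (m * k)).sum = (m.digits k).sum := by
  simpa using digits_sum_add_mul hm (by omega : 0 < m) k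

theorem exists_digits_sum_add_one_eq {m : ℕ} (hm : 1 < m) (n : ℕ) :
    ∃ c, (m.digits n).sum + 1 = (m.digits (n + 1)).sum + (m - 1) * c := by
  induction n using Nat.strong_induction_on with
  | _ n ih =>
  obtain ⟨r, q, hr, rfl⟩ : ∃ r q, r < m ∧ n = r + m * q :=
    ⟨n % m, n / m, mod_lt n (by omega), (mod_add_div n m).symm⟩
  rcases lt_or_ge (r + 1) m with hlast | hlast
  · refine ⟨0, ?_⟩
    rw [show r + m * q + 1 = (r + 1) + m * q by ring, digits_sum_add_mul hm hlast,
      digits_sum_add_mul hm hr]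
    omega
  · have hqm : q ≤ m * q := Nat.le_mul_of_pos_left q (by omega)
    obtain ⟨c, hc⟩ := ih q (by omega)
    refine ⟨c + 1, ?_⟩
    rw [show r + m * q + 1 = 0 + m * (q + 1) by rw [mul_add]; omega,
      digits_sum_add_mul hm (by omega : 0 < m), digits_sum_add_mul hm hr, mul_add]
    omega

end Nat

noncomputable def nonnegPolyInXPow (k : ℕ) : Subsemiring ℤ[X] :=
  ((mapRingHom (Nat.castRingHom ℤ)).comp (expand ℕ k).toRingHom).rangeS

theorem X_pow_mem_nonnegPolyInXPow (k : ℕ) : (X : ℤ[X]) ^ k ∈ nonnegPolyInXPow k :=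
  ⟨X, by simp⟩

theorem exists_nonneg_coeff_comp_of_mem_nonnegPolyInXPow {k : ℕ} {f : ℤ[X]}
    (hf : f ∈ nonnegPolyInXPow k) : ∃ q : ℤ[X], (∀ i, 0 ≤ q.coeff i) ∧ f = q.comp (X ^ k) := by
  obtain ⟨q, rfl⟩ := hf
  refine ⟨q.map (Nat.castRingHom ℤ), fun i => by simp, ?_⟩
  simp [← expand_eq_comp_X_pow, map_expand]

theorem pm_succ_of_dvd {m n : ℕ} (hm : 2 ≤ m) (h : m ∣ n + 1) :
    pm m (n + 1) = X * pm m n + pm m ((n + 1) / m) := by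
  rw [pm, dif_pos ⟨hm, h⟩]

theorem pm_succ_of_not_dvd {m n : ℕ} (h : ¬ m ∣ n + 1) : pm m (n + 1) = X * pm m n := by
  rw [pm, dif_neg fun h' => h h'.2, add_zero]

theorem exists_pm_eq_X_pow_digits_sum_mul {m : ℕ} (hm : 2 ≤ m) (n : ℕ) :
    ∃ f ∈ nonnegPolyInXPow (m - 1), pm m n = X ^ (m.digits n).sum * f := by
  induction n using Nat.strong_induction_on with
  | _ n ih =>
  cases n with
  | zero => exact ⟨1, one_mem _, by simp [pm]⟩
  | succ n =>
    obtain ⟨f, hf, hpn⟩ := ih n n.lt_succ_self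
    obtain ⟨c, hc⟩ := Nat.exists_digits_sum_add_one_eq hm n
    have hshift : X * pm m n = X ^ (m.digits (n + 1)).sum * ((X ^ (m - 1)) ^ c * f) := by
      rw [hpn, ← mul_assoc, ← pow_succ', hc, pow_add, pow_mul, mul_assoc]
    have hshift_mem : (X ^ (m - 1)) ^ c * f ∈ nonnegPolyInXPow (m - 1) :=
      mul_mem (pow_mem (X_pow_mem_nonnegPolyInXPow _) c) hf
    by_cases hdvd : m ∣ n + 1
    · obtain ⟨k, hk⟩ := hdvd
      have hkn : k < n + 1 := by
        rw [hk]; exact lt_mul_left (Nat.pos_of_ne_zero (by rintro rfl; simp at hk)) hm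
      obtain ⟨g, hg, hpk⟩ := ih k hkn
      refine ⟨_, add_mem hshift_mem hg, ?_⟩
      rw [pm_succ_of_dvd hm ⟨k, hk⟩, hshift, hk, Nat.mul_div_cancel_left k (by omega), hpk,
        Nat.digits_sum_mul_left hm, mul_add]
    · exact ⟨_, hshift_mem, by rw [pm_succ_of_not_dvd hdvd, hshift]⟩

/-- p_m(n,t)/t^{s_m(n)} is a polynomial in t^{m-1} with nonnegative integer coefficients. -/
theorem pm_reduced (m : ℕ) (hm : 2 ≤ m) (n : ℕ) :
    ∃ q : Polynomial ℤ, (∀ i, 0 ≤ q.coeff i) ∧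
      pm m n = Polynomial.X ^ ((Nat.digits m n).sum) * q.comp (Polynomial.X ^ (m - 1)) := by
  obtain ⟨f, hf, hpm⟩ := exists_pm_eq_X_pow_digits_sum_mul hm n
  obtain ⟨q, hq, rfl⟩ := exists_nonneg_coeff_comp_of_mem_nonnegPolyInXPow hf
  exact ⟨q, hq, hpm⟩
end
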